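/- Let X be submetrizable, Y functionally Hausdorff and dense-in-itself such that every y ∈ Y lies in a subspace Q(y) ⊆ Y in which y is a non-isolated q-point, and let f : X → Y be an open-closed continuous surjection. Then Y is submetrizable. -/

import Mathlib

/-!
Let `g : X → M` be a continuous injection into a metric space. The key point is that every fibre
has compact `g`-image `K y`. Otherwise some sequence `u` in `K y` has no cluster point in `K y`,
and after passing to a subsequence it has at most one cluster point in `M`, so (as `Y` is
Hausdorff) some neighbourhood `V` of `y` has closure missing the `f`-images of all `x` with `g x`
a cluster point of `u`. Pick distinct points `vₙ` of `Q(y) ∩ V` in the q-point neighbourhoods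
that lift to points `xₙ` with `g xₙ` within `1/(n+1)` of `uₙ` (possible since `f` is open). An
accumulation point `p` of the `vₙ` lifts, as `f` is closed, to a cluster point `z` of `(xₙ)`;
then `g z` is a cluster point of `u`, yet `p = f z` lies in the closure of `V`.

Since `f` is open and closed, `y ↦ K y` is continuous for the Hausdorff metric on the nonempty
compact subsets of `M`, and it is injective, so it induces a coarser metrizable topology on `Y`.
-/

universe u v

def Submetrizable (X : Type u) [t : TopologicalSpace X] : Prop :=
  ∃ σ : TopologicalSpace X, t ≤ σ ∧ @TopologicalSpace.MetrizableSpace X σ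

def FunctionallyHausdorff (Y : Type v) [TopologicalSpace Y] : Prop :=
  ∀ a b : Y, a ≠ b → ∃ g : Y → ℝ, Continuous g ∧ (∀ z, g z ∈ Set.Icc (0:ℝ) 1) ∧
    g a = 0 ∧ g b = 1

/-- `y` is a q-point of the space it lives in. -/
def IsQPoint {Z : Type v} [TopologicalSpace Z] (z : Z) : Prop :=
  ∃ U : ℕ → Set Z, (∀ i, IsOpen (U i) ∧ z ∈ U i) ∧
    ∀ x : ℕ → Z, (∀ i, x i ∈ U i) → Function.Injective x →
      ∃ p : Z, p ∈ closure (Set.range x \ {p})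

open Set Filter Metric Topology

theorem FunctionallyHausdorff.t2Space {Y : Type*} [TopologicalSpace Y]
    (hY : FunctionallyHausdorff Y) : T2Space Y where
  t2 a b hab := by
    obtain ⟨φ, hφ, -, ha, hb⟩ := hY a b hab
    refine ⟨φ ⁻¹' Iio (1 / 2), φ ⁻¹' Ioi (1 / 2), isOpen_Iio.preimage hφ,
      isOpen_Ioi.preimage hφ, by norm_num [ha], by norm_num [hb], ?_⟩
    exact Iio_disjoint_Ioi_same.preimage φ

theorem Submetrizable.exists_continuous_injective {X : Type u} [TopologicalSpace X]
    (hX : Submetrizable X) :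
    ∃ (M : Type u) (_ : MetricSpace M) (g : X → M), Continuous g ∧ Function.Injective g := by
  obtain ⟨σ, hle, hσ⟩ := hX
  let _ := @TopologicalSpace.metrizableSpaceMetric X σ hσ
  exact ⟨X, inferInstance, id, continuous_id_iff_le.2 hle, Function.injective_id⟩

theorem submetrizable_of_continuous_injective {Y Z : Type*} [TopologicalSpace Y]
    [TopologicalSpace Z] [TopologicalSpace.MetrizableSpace Z] {h : Y → Z} (hc : Continuous h)
    (hinj : Function.Injective h) : Submetrizable Y := by
  let σ := TopologicalSpace.induced h ‹_›
  exact ⟨σ, continuous_iff_le_induced.1 hc, (IsEmbedding.mk ⟨rfl⟩ hinj).metrizableSpace⟩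

theorem exists_injective_forall_mem_of_infinite {α : Type*} {E : ℕ → Set α}
    (hE : ∀ n, (E n).Infinite) : ∃ v : ℕ → α, Function.Injective v ∧ ∀ n, v n ∈ E n := by
  classical
  choose next hnext using fun n (s : Finset α) => (hE n).exists_notMem_finset s
  let F : ℕ → Finset α := fun n => Nat.rec ∅ (fun k s => insert (next k s) s) n
  have hF : ∀ m n, m < n → next m (F m) ∈ F n := by
    intro m n hmn
    induction n with
    | zero => omega
    | succ n ih =>
      rcases Nat.lt_succ_iff_lt_or_eq.1 hmn with h | rfl
      · exact Finset.mem_insert_of_mem (ih h)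
      · exact Finset.mem_insert_self _ _
  refine ⟨fun n => next n (F n), fun m n (hmn : next m (F m) = next n (F n)) => ?_,
    fun n => (hnext n (F n)).1⟩
  by_contra hne
  rcases lt_or_gt_of_ne hne with h | h
  · exact (hnext n (F n)).2 (hmn ▸ hF m n h)
  · exact (hnext m (F m)).2 (hmn ▸ hF n m h)

theorem mapClusterPt_of_mem_closure_image {X : Type*} [TopologicalSpace X] [T1Space X]
    {x : ℕ → X} {I : Set ℕ} {z : X} (hz : z ∈ closure (x '' I)) (hzI : z ∉ x '' I) :
    MapClusterPt z atTop x := by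
  rw [mapClusterPt_iff_frequently]
  intro s hs
  rw [frequently_atTop]
  intro N
  have hhead : (x '' (I ∩ Iio N))ᶜ ∈ 𝓝 z :=
    (((finite_Iio N).subset inter_subset_right).image x).isClosed.compl_mem_nhds
      fun h => hzI (image_mono inter_subset_left h)
  obtain ⟨_, ⟨hs', hhead'⟩, n, hn, rfl⟩ := mem_closure_iff_nhds.1 hz _ (inter_mem hs hhead)
  exact ⟨n, not_lt.1 fun h => hhead' ⟨n, ⟨hn, h⟩, rfl⟩, hs'⟩

theorem IsClosedMap.exists_mapClusterPt_of_mem_closure {X Y : Type*} [TopologicalSpace X]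
    [T1Space X] [TopologicalSpace Y] {f : X → Y} (hf : IsClosedMap f) {x : ℕ → X} {I : Set ℕ}
    {p : Y} (hp : p ∈ closure (f '' (x '' I))) (hpI : ∀ n ∈ I, f (x n) ≠ p) :
    ∃ z, f z = p ∧ MapClusterPt z atTop x := by
  obtain ⟨z, hz, rfl⟩ := hf.closure_image_subset _ hp
  refine ⟨z, rfl, mapClusterPt_of_mem_closure_image hz ?_⟩
  rintro ⟨n, hn, rfl⟩
  exact hpI n hn rfl

theorem MapClusterPt.of_tendsto_dist_zero {M α : Type*} [PseudoMetricSpace M] {l : Filter α}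
    {u v : α → M} {a : M} (ha : MapClusterPt a l u)
    (huv : Tendsto (fun n => dist (u n) (v n)) l (𝓝 0)) : MapClusterPt a l v := by
  rw [nhds_basis_ball.mapClusterPt_iff_frequently] at ha ⊢
  intro ε hε
  refine ((ha (ε / 2) (half_pos hε)).and_eventually
    (huv.eventually (gt_mem_nhds (half_pos hε)))).mono fun n ⟨hu, hd⟩ => ?_
  rw [mem_ball] at hu ⊢
  calc dist (v n) a ≤ dist (v n) (u n) + dist (u n) a := dist_triangle _ _ _
    _ < ε / 2 + ε / 2 := by rw [dist_comm] at hd; exact add_lt_add hd hu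
    _ = ε := add_halves ε

theorem exists_isOpen_disjoint_closure_of_subsingleton {Y : Type*} [TopologicalSpace Y]
    [T2Space Y] {S : Set Y} {y : Y} (hS : S.Subsingleton) (hy : y ∉ S) :
    ∃ V, IsOpen V ∧ y ∈ V ∧ Disjoint (closure V) S := by
  rcases hS.eq_empty_or_singleton with rfl | ⟨b, rfl⟩
  · exact ⟨univ, isOpen_univ, mem_univ y, disjoint_empty _⟩
  · obtain ⟨V, V', hV, hV', hyV, hbV', hVV'⟩ := t2_separation fun h => hy (mem_singleton_iff.2 h)
    exact ⟨V, hV, hyV, disjoint_singleton_right.2 fun hb =>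
      (hVV'.closure_left hV').le_bot ⟨hb, hbV'⟩⟩

theorem hausdorffDist_le_of_subset_thickening {M : Type*} [PseudoMetricSpace M] {s t : Set M}
    {δ : ℝ} (hδ : 0 ≤ δ) (hst : s ⊆ thickening δ t) (hts : t ⊆ thickening δ s) :
    hausdorffDist s t ≤ δ := by
  refine hausdorffDist_le_of_mem_dist hδ (fun a ha => ?_) fun b hb => ?_
  · obtain ⟨b, hb, hab⟩ := mem_thickening_iff.1 (hst ha)
    exact ⟨b, hb, hab.le⟩
  · obtain ⟨a, ha, hba⟩ := mem_thickening_iff.1 (hts hb)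
    exact ⟨a, ha, hba.le⟩

section FiberImages

variable {X Y M : Type*} [MetricSpace M] {f : X → Y} {g : X → M}

def imageFiberCompacts (hK : ∀ y, IsCompact (g '' (f ⁻¹' {y})))
    (hsurj : Function.Surjective f) (y : Y) : TopologicalSpace.NonemptyCompacts M :=
  ⟨⟨g '' (f ⁻¹' {y}), hK y⟩, let ⟨x, hx⟩ := hsurj y; ⟨g x, x, hx, rfl⟩⟩

theorem imageFiberCompacts_injective (hginj : Function.Injective g)
    (hK : ∀ y, IsCompact (g '' (f ⁻¹' {y}))) (hsurj : Function.Surjective f) :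
    Function.Injective (imageFiberCompacts hK hsurj) := by
  intro a b hab
  obtain ⟨x, rfl⟩ := hsurj a
  have hfib : g '' (f ⁻¹' {f x}) = g '' (f ⁻¹' {b}) :=
    congrArg ((↑) : TopologicalSpace.NonemptyCompacts M → Set M) hab
  obtain ⟨x', hx', hgx⟩ : g x ∈ g '' (f ⁻¹' {b}) := hfib ▸ ⟨x, rfl, rfl⟩
  rw [← hginj hgx]
  exact hx'

variable [TopologicalSpace X] [TopologicalSpace Y]

theorem IsClosedMap.eventually_image_fiber_subset_thickening (hf : IsClosedMap f)
    (hg : Continuous g) (y : Y) {δ : ℝ} (hδ : 0 < δ) :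
    ∀ᶠ y' in 𝓝 y, g '' (f ⁻¹' {y'}) ⊆ thickening δ (g '' (f ⁻¹' {y})) := by
  refine (hf.eventually_nhds_fiber (p := fun x => g x ∈ thickening δ (g '' (f ⁻¹' {y}))) y
    fun x hx => ?_).mono ?_
  · exact (isOpen_thickening.preimage hg).mem_nhds
      (self_subset_thickening hδ _ (mem_image_of_mem g hx))
  · rintro y' h _ ⟨x, hx, rfl⟩
    exact h x hx

theorem IsOpenMap.eventually_subset_thickening_image_fiber (hf : IsOpenMap f)
    (hg : Continuous g) {y : Y} (hK : IsCompact (g '' (f ⁻¹' {y}))) {δ : ℝ} (hδ : 0 < δ) :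
    ∀ᶠ y' in 𝓝 y, g '' (f ⁻¹' {y}) ⊆ thickening δ (g '' (f ⁻¹' {y'})) := by
  obtain ⟨t, htK, ht, hKt⟩ := finite_cover_balls_of_compact hK (half_pos hδ)
  have hnear : ∀ b ∈ t, ∀ᶠ y' in 𝓝 y, b ∈ thickening (δ / 2) (g '' (f ⁻¹' {y'})) := by
    intro b hb
    obtain ⟨x, hx : f x = y, rfl⟩ := htK hb
    have hball := hf.image_mem_nhds
      ((isOpen_ball.preimage hg).mem_nhds (mem_ball_self (x := g x) (half_pos hδ)))
    rw [hx] at hball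
    filter_upwards [hball] with y' ⟨x', hx', hx'y⟩
    exact mem_thickening_iff.2 ⟨g x', ⟨x', hx'y, rfl⟩, dist_comm (g x) (g x') ▸ hx'⟩
  filter_upwards [(eventually_all_finite ht).2 hnear] with y' hy' a ha
  obtain ⟨b, hb, hab⟩ := mem_iUnion₂.1 (hKt ha)
  have hδ' := thickening_thickening_subset (δ / 2) (δ / 2) (g '' (f ⁻¹' {y'}))
  rw [add_halves] at hδ'
  exact hδ' (mem_thickening_iff.2 ⟨b, hy' b hb, hab⟩)

theorem continuous_imageFiberCompacts (hfo : IsOpenMap f) (hfc : IsClosedMap f)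
    (hg : Continuous g) (hK : ∀ y, IsCompact (g '' (f ⁻¹' {y})))
    (hsurj : Function.Surjective f) : Continuous (imageFiberCompacts hK hsurj) := by
  rw [Metric.continuous_iff']
  intro y ε hε
  filter_upwards [hfc.eventually_image_fiber_subset_thickening hg y (half_pos hε),
    hfo.eventually_subset_thickening_image_fiber hg (hK y) (half_pos hε)] with y' h₁ h₂
  rw [NonemptyCompacts.dist_eq]
  exact (hausdorffDist_le_of_subset_thickening (half_pos hε).le h₁ h₂).trans_lt (half_lt_self hε)

theorem exists_mapClusterPt_mem_image_fiber_of_subsingleton [T1Space X] [T2Space Y]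
    (hfo : IsOpenMap f) (hfc : IsClosedMap f) (hg : Continuous g)
    (hginj : Function.Injective g) {Q : Set Y} {y : Y} (hy : y ∈ Q)
    (hne : (𝓝[≠] (⟨y, hy⟩ : Q)).NeBot) (hqp : IsQPoint (⟨y, hy⟩ : Q))
    {u : ℕ → M} (hu : ∀ n, u n ∈ g '' (f ⁻¹' {y}))
    (hW : {a | MapClusterPt a atTop u}.Subsingleton) :
    ∃ a ∈ g '' (f ⁻¹' {y}), MapClusterPt a atTop u := by
  by_contra! hno
  obtain ⟨V, hVo, hyV, hVW⟩ := exists_isOpen_disjoint_closure_of_subsingleton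
    ((hW.preimage hginj).image f) (y := y) fun ⟨x, hxW, hxy⟩ => hno (g x) ⟨x, hxy, rfl⟩ hxW
  obtain ⟨U, hU, hsel⟩ := hqp
  have hnhds : ∀ n, {q : Q | (q : Y) ∈ V ∩ f '' (g ⁻¹' ball (u n) (1 / (n + 1)))} ∩ U n ∈
      𝓝 (⟨y, hy⟩ : Q) := by
    intro n
    obtain ⟨x, hx : f x = y, hxu⟩ := hu n
    have hball := hfo.image_mem_nhds ((isOpen_ball.preimage hg).mem_nhds
      (mem_ball_self (x := g x) (Nat.one_div_pos_of_nat (n := n))))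
    rw [hx, hxu] at hball
    exact inter_mem (continuous_subtype_val.continuousAt.preimage_mem_nhds
      (inter_mem (hVo.mem_nhds hyV) hball)) ((hU n).1.mem_nhds (hU n).2)
  obtain ⟨v, hvinj, hv⟩ :=
    exists_injective_forall_mem_of_infinite fun n => infinite_of_mem_nhds _ (hnhds n)
  choose x' hx'u hx'v using fun n => (hv n).1.2
  obtain ⟨p, hp⟩ := hsel v (fun n => (hv n).2) hvinj
  set A : Set Y := Subtype.val '' (range v \ {p})
  set I : Set ℕ := {n | v n ≠ p}
  have hpA : (p : Y) ∈ closure A := closure_subtype.1 hp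
  have hAV : A ⊆ V := by
    rintro _ ⟨_, ⟨⟨n, rfl⟩, -⟩, rfl⟩
    exact (hv n).1.1
  have hAI : A ⊆ f '' (x' '' I) := by
    rintro _ ⟨_, ⟨⟨n, rfl⟩, hn⟩, rfl⟩
    exact ⟨x' n, ⟨n, hn, rfl⟩, hx'v n⟩
  obtain ⟨z, hzp, hz⟩ := hfc.exists_mapClusterPt_of_mem_closure (closure_mono hAI hpA)
    fun n hn h => hn (Subtype.ext (hx'v n ▸ h))
  have hgz : MapClusterPt (g z) atTop u :=
    (hz.continuousAt_comp hg.continuousAt).of_tendsto_dist_zero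
      (squeeze_zero (fun _ => dist_nonneg) (fun n => (hx'u n).le)
        tendsto_one_div_add_atTop_nhds_zero_nat)
  exact hVW.ne_of_mem (closure_mono hAV hpA) ⟨z, hgz, hzp⟩ rfl

theorem isCompact_image_fiber_of_isQPoint [T1Space X] [T2Space Y]
    (hfo : IsOpenMap f) (hfc : IsClosedMap f) (hg : Continuous g)
    (hginj : Function.Injective g) {Q : Set Y} {y : Y} (hy : y ∈ Q)
    (hne : (𝓝[≠] (⟨y, hy⟩ : Q)).NeBot) (hqp : IsQPoint (⟨y, hy⟩ : Q)) :
    IsCompact (g '' (f ⁻¹' {y})) := by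
  refine IsSeqCompact.isCompact fun u hu => ?_
  suffices ∃ a ∈ g '' (f ⁻¹' {y}), MapClusterPt a atTop u by
    obtain ⟨a, ha, hau⟩ := this
    exact ⟨a, ha, hau.tendsto_subseq⟩
  by_cases hw : ∃ w, MapClusterPt w atTop u
  · obtain ⟨w, hw⟩ := hw
    obtain ⟨ψ, hψ, hψw⟩ := hw.tendsto_subseq
    obtain ⟨a, ha, hau⟩ := exists_mapClusterPt_mem_image_fiber_of_subsingleton hfo hfc hg hginj
      hy hne hqp (u := u ∘ ψ) (fun n => hu (ψ n)) fun a ha b hb =>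
        (eq_of_nhds_neBot (ClusterPt.mono ha hψw)).trans
          (eq_of_nhds_neBot (ClusterPt.mono hb hψw)).symm
    exact ⟨a, ha, hau.of_comp hψ.tendsto_atTop⟩
  · push Not at hw
    exact exists_mapClusterPt_mem_image_fiber_of_subsingleton hfo hfc hg hginj hy hne hqp hu
      fun a ha => (hw a ha).elim

end FiberImages

theorem submetrizable_of_openClosed_image_qpoints_general {X : Type u} {Y : Type v}
    [TopologicalSpace X] [TopologicalSpace Y] [T1Space X]
    (hX : Submetrizable X) (hY : FunctionallyHausdorff Y)
    (hq : ∀ y : Y, ∃ (Q : Set Y) (hy : y ∈ Q),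
      (nhdsWithin (⟨y, hy⟩ : Q) ({(⟨y, hy⟩ : Q)}ᶜ)).NeBot ∧ IsQPoint (⟨y, hy⟩ : Q))
    (f : X → Y) (hsurj : Function.Surjective f)
    (hopen : IsOpenMap f) (hclosed : IsClosedMap f) :
    Submetrizable Y := by
  have := hY.t2Space
  obtain ⟨M, _, g, hg, hginj⟩ := hX.exists_continuous_injective
  have hK : ∀ y, IsCompact (g '' (f ⁻¹' {y})) := fun y =>
    let ⟨_, hy, hne, hqp⟩ := hq y
    isCompact_image_fiber_of_isQPoint hopen hclosed hg hginj hy hne hqp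
  exact submetrizable_of_continuous_injective
    (continuous_imageFiberCompacts hopen hclosed hg hK hsurj)
    (imageFiberCompacts_injective hginj hK hsurj)

/-- If `X` is submetrizable, `Y` is functionally Hausdorff, dense-in-itself, every point of `Y`
lies in a subspace in which it is a non-isolated q-point, and `f : X → Y` is an open-closed
continuous surjection, then `Y` is submetrizable. -/
theorem submetrizable_of_openClosed_image_qpoints {X : Type u} {Y : Type v}
    [TopologicalSpace X] [TopologicalSpace Y] [T1Space X] [T1Space Y]
    (hX : Submetrizable X) (hY : FunctionallyHausdorff Y)
    (hdense : ∀ y : Y, (nhdsWithin y {y}ᶜ).NeBot)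
    (hq : ∀ y : Y, ∃ (Q : Set Y) (hy : y ∈ Q),
      (nhdsWithin (⟨y, hy⟩ : Q) ({(⟨y, hy⟩ : Q)}ᶜ)).NeBot ∧ IsQPoint (⟨y, hy⟩ : Q))
    (f : X → Y) (hf : Continuous f) (hsurj : Function.Surjective f)
    (hopen : IsOpenMap f) (hclosed : IsClosedMap f) :
    Submetrizable Y :=
  submetrizable_of_openClosed_image_qpoints_general hX hY hq f hsurj hopen hclosed
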